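/- arXiv:1806.01019 — 2 statements merged into one kernel-verified Lean document; each statement's English description precedes it below -/
import Mathlib

section
/- Let A be a semisimple Banach algebra and D : A → A a continuous Jordan derivation, i.e. a continuous linear map with D(a²) = a D(a) + D(a) a for all a ∈ A. Then D is a derivation: D(ab) = a D(b) + D(a) b for all a, b ∈ A. -/
section Aux

variable {A : Type*} [NormedRing A] [NormedAlgebra ℂ A]

/-- A ring with zero Jacobson radical is semiprime. -/
private theorem sp_aux (hss : (⊥ : Ideal A).jacobson = ⊥)
    (u : A) (hu : ∀ x : A, u * x * u = 0) : u = 0 := by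
  have hmem : u ∈ (⊥ : Ideal A).jacobson := by
    rw [Ideal.jacobson, Ideal.mem_sInf]
    rintro M ⟨-, hM⟩
    by_contra hnot
    have hlt : M < M ⊔ Ideal.span {u} := by
      refine lt_of_le_of_ne le_sup_left (fun h => hnot ?_)
      rw [h]
      exact Submodule.mem_sup_right (Ideal.subset_span rfl)
    have htop : M ⊔ Ideal.span {u} = ⊤ := hM.out.2 _ hlt
    obtain ⟨m, hm, s, hs, hms⟩ := Submodule.mem_sup.mp
      (htop ▸ Submodule.mem_top : (1:A) ∈ M ⊔ Ideal.span {u})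
    obtain ⟨r, hr⟩ := Ideal.mem_span_singleton'.mp hs
    have hs2 : s * s = 0 := by
      rw [← hr]
      calc r * u * (r * u) = r * (u * r * u) := by noncomm_ring
        _ = 0 := by rw [hu r, mul_zero]
    have hone : (1 + s) * m = 1 := by
      have hm1 : m = 1 - s := by rw [← hms]; abel
      rw [hm1]
      calc (1 + s) * (1 - s) = 1 - s * s := by noncomm_ring
        _ = 1 := by rw [hs2, sub_zero]
    exact hM.ne_top ((Ideal.eq_top_iff_one M).mpr (hone ▸ Ideal.mul_mem_left M (1 + s) hm))
  rw [hss] at hmem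
  exact hmem

private theorem half_aux {x y : A} (h : x + x = y + y) : x = y := by
  have h2 : (2:ℂ) • x = (2:ℂ) • y := by rw [two_smul, two_smul]; exact h
  calc x = (2:ℂ)⁻¹ • ((2:ℂ) • x) := (inv_smul_smul₀ two_ne_zero x).symm
    _ = (2:ℂ)⁻¹ • ((2:ℂ) • y) := by rw [h2]
    _ = y := inv_smul_smul₀ two_ne_zero y

private theorem halfz_aux {x : A} (h : x + x = 0) : x = 0 :=
  half_aux (by rw [h, add_zero])

end Aux

set_option maxHeartbeats 2000000 in
/-- Sinclair's theorem: a continuous Jordan derivation on a semisimple Banach algebra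
is a derivation. -/
theorem jordan_derivation_of_semisimple {A : Type*} [NormedRing A] [NormedAlgebra ℂ A]
    [CompleteSpace A] (hss : (⊥ : Ideal A).jacobson = ⊥)
    (D : A →L[ℂ] A) (hJ : ∀ a : A, D (a * a) = a * D a + D a * a) :
    ∀ a b : A, D (a * b) = a * D b + D a * b := by
  have SP : ∀ u : A, (∀ x : A, u * x * u = 0) → u = 0 := fun u hu => sp_aux hss u hu
  -- polarized Jordan identity
  have hJ2 : ∀ u v : A, D (u*v + v*u) = u * D v + D u * v + v * D u + D v * u := by
    intro u v
    have h := hJ (u + v)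
    rw [show (u+v)*(u+v) = u*u + (u*v + v*u) + v*v from by noncomm_ring,
      map_add, map_add, hJ u, hJ v, map_add D u v] at h
    linear_combination (norm := noncomm_ring) h
  -- triple product identity
  have hT : ∀ u v : A, D (u*v*u) = D u * v * u + u * D v * u + u * v * D u := by
    intro u v
    have h1 := hJ2 u (u*v + v*u)
    rw [hJ2 u v,
      show u*(u*v + v*u) + (u*v + v*u)*u = (u*u*v + v*(u*u)) + (u*v*u + u*v*u) from by
        noncomm_ring,
      map_add, map_add, map_add] at h1
    have hA := hJ2 (u*u) v
    rw [map_add, hJ u] at hA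
    exact half_aux (by linear_combination (norm := noncomm_ring) h1 - hA)
  -- linearized triple product identity
  have hT3 : ∀ u v w : A, D (u*v*w + w*v*u)
      = D u*v*w + u*D v*w + u*v*D w + D w*v*u + w*D v*u + w*v*D u := by
    intro u v w
    have h := hT (u+w) v
    rw [show (u+w)*v*(u+w) = u*v*u + (u*v*w + w*v*u) + w*v*w from by noncomm_ring,
      map_add, map_add, map_add, map_add D u w] at h
    rw [map_add]
    linear_combination (norm := noncomm_ring) h - hT u v - hT w v
  -- the (✦) identity : G r [u,v] = [G u v, r]
  have hStar : ∀ r u v : A, D (r*(u*v - v*u)) - r * D (u*v - v*u) - D r * (u*v - v*u)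
      = (D (u*v) - u*D v - D u*v) * r - r * (D (u*v) - u*D v - D u*v) := by
    intro r u v
    have h1 := hT3 r u v
    have h2 := hJ2 (v*u) r
    have h3 := hJ2 u v
    simp only [map_add, map_sub, mul_sub, sub_mul, ← mul_assoc] at h1 h2 h3 ⊢
    linear_combination (norm := noncomm_ring) h1 - h2 - h3*r
  -- Brešar's heavy identity : g x k + k x g = 0
  have hHeavy : ∀ a b x : A,
      (D (a*b) - a*D b - D a*b) * x * (a*b - b*a)
        + (a*b - b*a) * x * (D (a*b) - a*D b - D a*b) = 0 := by
    intro a b x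
    have e1 := hT3 (a*b) x (b*a)
    have e2 := hT a (b*x*b); rw [hT b x] at e2
    have e3 := hT b (a*x*a); rw [hT a x] at e3
    rw [map_add, show (a*b)*x*(b*a) = a*(b*x*b)*a from by noncomm_ring,
      show (b*a)*x*(a*b) = b*(a*x*a)*b from by noncomm_ring, e2, e3] at e1
    have h3 := hJ2 a b
    rw [map_add] at h3
    linear_combination (norm := noncomm_ring) e1 + (a*b)*x*h3 + h3*(x*(a*b))
  -- Lemma 1 : g x k = 0
  have hGK : ∀ a b x : A, (D (a*b) - a*D b - D a*b) * x * (a*b - b*a) = 0 := by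
    intro a b x
    set g := D (a*b) - a*D b - D a*b with hgdef
    set k := a*b - b*a with hkdef
    have hF : ∀ X : A, g * X * k + k * X * g = 0 := fun X => hHeavy a b X
    apply SP
    intro z
    have s1 : (g*x*k)*z*(g*x*k) = -((k*x*g)*z*(g*x*k)) := by
      linear_combination (norm := noncomm_ring) (hF x)*(z*(g*x*k))
    have s2 : (k*x*g)*z*(g*x*k) = -((g*x*g)*z*(k*x*k)) := by
      linear_combination (norm := noncomm_ring) (hF (x*g*z))*(x*k)
    have s3 : (g*x*g)*z*(k*x*k) = -((g*x*k)*z*(g*x*k)) := by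
      linear_combination (norm := noncomm_ring) (g*x)*(hF z)*(x*k)
    have : (g*x*k)*z*(g*x*k) + (g*x*k)*z*(g*x*k) = 0 := by
      linear_combination (norm := noncomm_ring) s1 - s2 + s3
    exact halfz_aux this
  -- linearize in the second variable
  have hF1a : ∀ a b d x : A, (D (a*b) - a*D b - D a*b) * x * (a*d - d*a) = 0 := by
    intro a b d x
    have lin : ∀ X : A, (D (a*b) - a*D b - D a*b) * X * (a*d - d*a)
        + (D (a*d) - a*D d - D a*d) * X * (a*b - b*a) = 0 := by
      intro X
      have h := hGK a (b+d) X
      rw [mul_add a b d, add_mul b d a, map_add D (a*b) (a*d), map_add D b d] at h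
      linear_combination (norm := noncomm_ring) h - hGK a b X - hGK a d X
    apply SP
    intro z
    linear_combination (norm := noncomm_ring)
      lin (x*(a*d - d*a)*z*(D (a*b) - a*D b - D a*b)*x)
      - ((D (a*d) - a*D d - D a*d)*x*(a*d - d*a)*z)*(hGK a b x)
  -- linearize in the first variable
  have hF1 : ∀ a b c d x : A, (D (a*b) - a*D b - D a*b) * x * (c*d - d*c) = 0 := by
    intro a b c d x
    have lin : ∀ X : A, (D (a*b) - a*D b - D a*b) * X * (c*d - d*c)
        + (D (c*b) - c*D b - D c*b) * X * (a*d - d*a) = 0 := by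
      intro X
      have h := hF1a (a+c) b d X
      rw [add_mul a c b, add_mul a c d, mul_add d a c, map_add D (a*b) (c*b),
        map_add D a c] at h
      linear_combination (norm := noncomm_ring) h - hF1a a b d X - hF1a c b d X
    apply SP
    intro z
    linear_combination (norm := noncomm_ring)
      lin (x*(c*d - d*c)*z*(D (a*b) - a*D b - D a*b)*x)
      - ((D (c*b) - c*D b - D c*b)*x*(c*d - d*c)*z)*(hF1a a b d x)
  -- the flipped version
  have hF2 : ∀ a b c d x : A, (c*d - d*c) * x * (D (a*b) - a*D b - D a*b) = 0 := by
    intro a b c d x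
    apply SP
    intro z
    linear_combination (norm := noncomm_ring)
      ((c*d - d*c)*x)*(hF1 a b c d z)*(x*(D (a*b) - a*D b - D a*b))
  -- centrality of G a b
  have hcen : ∀ a b r : A, (D (a*b) - a*D b - D a*b) * r = r * (D (a*b) - a*D b - D a*b) := by
    intro a b r
    have hv := hStar r a b
    have h0 : ∀ x : A, (D (r*(a*b - b*a)) - r * D (a*b - b*a) - D r * (a*b - b*a)) * x
        * ((D (a*b) - a*D b - D a*b) * r - r * (D (a*b) - a*D b - D a*b)) = 0 := by
      intro x
      exact hF1 r (a*b - b*a) (D (a*b) - a*D b - D a*b) r x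
    rw [hv] at h0
    have := SP _ h0
    linear_combination (norm := noncomm_ring) this
  -- D is a derivation on products with a commutator
  have hGcomm0 : ∀ r a b : A,
      D (r*(a*b - b*a)) = r * D (a*b - b*a) + D r * (a*b - b*a) := by
    intro r a b
    have h := hStar r a b
    rw [hcen a b r] at h
    linear_combination (norm := noncomm_ring) h
  -- endgame
  intro a b
  obtain ⟨g, hgdef⟩ : ∃ g : A, g = D (a*b) - a*D b - D a*b := ⟨_, rfl⟩
  obtain ⟨k, hkdef⟩ : ∃ k : A, k = a*b - b*a := ⟨_, rfl⟩
  have gk0 : ∀ c d : A, g * (c*d - d*c) = 0 := by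
    intro c d
    rw [hgdef]
    have := hF1 a b c d 1
    rwa [mul_one] at this
  have kg0 : k * g = 0 := by
    rw [hgdef, hkdef]
    have := hF2 a b a b 1
    rwa [mul_one] at this
  have gk' : g * k = 0 := by rw [hkdef]; exact gk0 a b
  -- product rule for k on the left
  have hky : ∀ y : A, D (k*y) = k * D y + D k * y := by
    intro y
    rw [hkdef]
    have h1 := hJ2 (a*b - b*a) y
    rw [map_add] at h1
    have h2 := hGcomm0 y a b
    linear_combination (norm := noncomm_ring) h1 - h2
  have hDkg : D k * g + k * D g = 0 := by
    have h := hky g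
    rw [kg0, map_zero] at h
    linear_combination (norm := noncomm_ring) -h
  have hDk2 : D k = (g + g) + ((a*D b - D b*a) + (D a*b - b*D a)) := by
    have h3 := hJ2 a b
    rw [map_add] at h3
    rw [hkdef, map_sub, hgdef]
    linear_combination (norm := noncomm_ring) -h3
  have hg2 : g * D k = g*g + g*g := by
    rw [hDk2]
    linear_combination (norm := noncomm_ring) gk0 a (D b) + gk0 (D a) b
  have hg3 : (g*g)*g = 0 := by
    apply halfz_aux
    linear_combination (norm := noncomm_ring) g*hDkg - hg2*g - gk'*(D g)
  have hc : ∀ r : A, g * r = r * g := by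
    intro r
    rw [hgdef]
    exact hcen a b r
  have hg2z : g*g = 0 := by
    apply SP
    intro x
    linear_combination (norm := noncomm_ring) g*(hc x)*(g*g) + (hc x)*(g*g*g) + x*hg3*g
  have hgz : g = 0 := by
    apply SP
    intro x
    linear_combination (norm := noncomm_ring) (hc x)*g + x*hg2z
  rw [hgdef] at hgz
  linear_combination (norm := noncomm_ring) hgz
end

section
/- Let G be a locally compact group and let μ, ν ∈ M(G) with Re μ = (μ + μ^⋆)/2 ∈ Z(M(G)) and μ − ν ∈ Z(M(G)). Define Δ : L¹(G) → M(G) by Δ(f) = f * μ − ν * f. Then for all f, g ∈ L¹(G) with f * g^⋆ = 0 one has f * Δ(g)^⋆ + Δ(f) * g^⋆ = 0. -/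
/-!
Expanding, `f * Δ(g)⋆ + Δ(f) * g⋆ = f (μ + μ⋆) g⋆ - (f g⋆) ν⋆ - ν (f g⋆)`. The last two terms
vanish because `f * g⋆ = 0`, and so does the first once the central element `μ + μ⋆` is moved
to the left of `f`.
-/

open Filter Topology

/-- An abstract interface for the measure convolution algebra `M(G)` of a locally compact
group `G`, together with the group algebra `L¹(G)` sitting inside it as a closed,
star-closed, two-sided ideal.  `wstar` is the weak* topology coming from
`M(G) = C₀(G)*`, and `delta` is the embedding of point masses (so `delta 1 = δ_e`
is the identity of `M(G)`). -/
class MeasureAlgebraSetting (G : Type*) [Group G] [TopologicalSpace G] [IsTopologicalGroup G]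
    [LocallyCompactSpace G] [T2Space G]
    (M : Type*) [NormedRing M] [StarRing M] [NormedAlgebra ℂ M] [CompleteSpace M]
    [StarModule ℂ M] where
  /-- the weak* topology on `M(G) = C₀(G)*` -/
  wstar : TopologicalSpace M
  /-- point masses `x ↦ δ_x` -/
  delta : G → M
  delta_one : delta 1 = 1
  delta_mul : ∀ x y : G, delta x * delta y = delta (x * y)
  delta_norm : ∀ x : G, ‖delta x‖ = 1
  /-- the group algebra `L¹(G)` inside `M(G)` -/
  L1 : Submodule ℂ M
  L1_closed : IsClosed (L1 : Set M)
  L1_mul_left : ∀ (μ : M), ∀ f ∈ L1, μ * f ∈ L1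
  L1_mul_right : ∀ (μ : M), ∀ f ∈ L1, f * μ ∈ L1
  L1_star : ∀ f ∈ L1, star f ∈ L1

variable {G : Type*} [Group G] [TopologicalSpace G] [IsTopologicalGroup G]
  [LocallyCompactSpace G] [T2Space G]
  {M : Type*} [NormedRing M] [StarRing M] [NormedAlgebra ℂ M] [CompleteSpace M]
  [StarModule ℂ M]

/-- convolution of elements of `L¹(G)` -/
instance instMulL1 {S : MeasureAlgebraSetting G M} : Mul S.L1 :=
  ⟨fun f g => ⟨(f : M) * (g : M), S.L1_mul_left (f : M) (g : M) g.2⟩⟩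

/-- involution on `L¹(G)` -/
instance instStarL1 {S : MeasureAlgebraSetting G M} : Star S.L1 :=
  ⟨fun f => ⟨star (f : M), S.L1_star (f : M) f.2⟩⟩

theorem Set.mem_center_of_smul_mem_center {R A : Type*} [Field R] [Semiring A] [Algebra R A]
    {c : R} (hc : c ≠ 0) {x : A} (h : c • x ∈ Set.center A) : x ∈ Set.center A := by
  have hx : c⁻¹ • c • x ∈ Subalgebra.center R A := (Subalgebra.center R A).smul_mem h c⁻¹
  rwa [inv_smul_smul₀ hc] at hx

section StarRing

variable {R : Type*} [Ring R] [StarRing R]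

def generalizedInnerDerivation (mu nu x : R) : R :=
  x * mu - nu * x

theorem generalizedInnerDerivation_mul_star_add_eq_zero {mu nu f g : R}
    (hre : mu + star mu ∈ Set.center R) (hfg : f * star g = 0) :
    f * star (generalizedInnerDerivation mu nu g) +
      generalizedInnerDerivation mu nu f * star g = 0 := by
  have hcomm : (mu + star mu) * f = f * (mu + star mu) := (hre.comm f).eq
  calc f * star (generalizedInnerDerivation mu nu g) +
        generalizedInnerDerivation mu nu f * star g
      = f * (mu + star mu) * star g - f * star g * star nu - nu * (f * star g) := by
        simp only [generalizedInnerDerivation, star_sub, star_mul]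
        noncomm_ring
    _ = (mu + star mu) * (f * star g) - f * star g * star nu - nu * (f * star g) := by
        rw [← hcomm, mul_assoc]
    _ = 0 := by simp [hfg]

end StarRing

theorem inner_like_is_derivation_at_star_orthogonality_general (S : MeasureAlgebraSetting G M)
    (mu nu : M) (hre : (2⁻¹ : ℂ) • (mu + star mu) ∈ Set.center M) :
    ∀ f ∈ S.L1, ∀ g ∈ S.L1, f * star g = 0 →
      f * star (g * mu - nu * g) + (f * mu - nu * f) * star g = 0 := by
  intro f _ g _ hfg
  exact generalizedInnerDerivation_mul_star_add_eq_zero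
    (Set.mem_center_of_smul_mem_center (by norm_num) hre) hfg

/-- Converse: for `μ, ν ∈ M(G)` with `Re μ` and `μ - ν` central, the map
`Δ(f) = f*μ - ν*f` is a derivation at pairs with `f * g⋆ = 0`. -/
theorem inner_like_is_derivation_at_star_orthogonality (S : MeasureAlgebraSetting G M)
    (mu nu : M) (hre : (2⁻¹ : ℂ) • (mu + star mu) ∈ Set.center M)
    (hc : mu - nu ∈ Set.center M) :
    ∀ f ∈ S.L1, ∀ g ∈ S.L1, f * star g = 0 →
      f * star (g * mu - nu * g) + (f * mu - nu * f) * star g = 0 :=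
  inner_like_is_derivation_at_star_orthogonality_general S mu nu hre
end
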